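/- For n ≥ 2 and even k with k ∉ {n-2, n-1}, the map φ(u) = f_k(u) negating bit k of every vertex address is NOT a graph automorphism of CQ_n. -/

import Mathlib

/-- The pair-related relation on 2-bit strings `(x₂, x₁)`. -/
def pairRel (a b : Bool × Bool) : Prop :=
  (a = (false, false) ∧ b = (false, false)) ∨
  (a = (true, false) ∧ b = (true, false)) ∨
  (a = (false, true) ∧ b = (true, true)) ∨
  (a = (true, true) ∧ b = (false, true))

/-- Bit `i` of a length-`n` address (`false` out of range). -/
def bitOf {n : ℕ} (u : Fin n → Bool) (i : ℕ) : Bool :=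
  if h : i < n then u ⟨i, h⟩ else false

/-- `u` and `v` are adjacent along dimension `x` in the crossed cube. -/
def adjAlong (n : ℕ) (u v : Fin n → Bool) (x : ℕ) : Prop :=
  x < n ∧
  bitOf v x = !(bitOf u x) ∧
  (x % 2 = 1 → bitOf v (x - 1) = bitOf u (x - 1)) ∧
  (∀ i, x < i → bitOf u i = bitOf v i) ∧
  (∀ i, 2 * i + 1 < x →
    pairRel (bitOf u (2 * i + 1), bitOf u (2 * i)) (bitOf v (2 * i + 1), bitOf v (2 * i)))

/-- The `n`-dimensional crossed cube. -/
def CQ (n : ℕ) : SimpleGraph (Fin n → Bool) where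
  Adj u v := ∃ x, adjAlong n u v x ∨ adjAlong n v u x
  symm := ⟨by rintro u v ⟨x, h | h⟩; exacts [⟨x, Or.inr h⟩, ⟨x, Or.inl h⟩]⟩
  loopless := ⟨by
    rintro u ⟨x, h | h⟩ <;>
    · obtain ⟨-, h2, -⟩ := h
      simp at h2⟩

/-- `fneg n i u` negates bit `i` of `u`. -/
def fneg (n i : ℕ) (u : Fin n → Bool) : Fin n → Bool :=
  fun j => if (j : ℕ) = i then !(u j) else u j

/-- `φ` is an automorphism of `CQ n`. -/
def IsAut (n : ℕ) (φ : (Fin n → Bool) → (Fin n → Bool)) : Prop :=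
  Function.Bijective φ ∧ ∀ u v, (CQ n).Adj u v ↔ (CQ n).Adj (φ u) (φ v)

/-- Vertices in the same orbit of the automorphism group. -/
def orbitSetoid (n : ℕ) : Setoid (Fin n → Bool) where
  r u v := ∃ φ : CQ n ≃g CQ n, φ u = v
  iseqv := by
    refine ⟨fun u => ⟨RelIso.refl (CQ n).Adj, rfl⟩, ?_, ?_⟩
    · rintro u v ⟨φ, h⟩
      exact ⟨φ.symm, by rw [← h]; exact φ.symm_apply_apply u⟩
    · rintro u v w ⟨φ, h⟩ ⟨ψ, h'⟩
      exact ⟨RelIso.trans φ ψ, by simp [RelIso.trans_apply, h, h']⟩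

/-- The orbit number of `CQ n`. -/
noncomputable def Orb (n : ℕ) : ℕ := Nat.card (Quotient (orbitSetoid n))

/-- There is a path on exactly 4 vertices from `x` to `y` in `CQ n`. -/
def hasP4 (n : ℕ) (x y : Fin n → Bool) : Prop :=
  ∃ a b, (CQ n).Adj x a ∧ (CQ n).Adj a b ∧ (CQ n).Adj b y ∧
    x ≠ a ∧ x ≠ b ∧ x ≠ y ∧ a ≠ b ∧ a ≠ y ∧ b ≠ y

/-- The automorphism in Lemma 4 (odd `n ≥ 3`). -/
def phiOdd (n : ℕ) (u : Fin n → Bool) : Fin n → Bool :=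
  if bitOf u (n - 1) = false then fneg n (n - 3) u
  else fneg n (n - 3) (fneg n (n - 2) u)

/-- The automorphism in Lemma 5 (even `n ≥ 4`). -/
def phiEven (n : ℕ) (u : Fin n → Bool) : Fin n → Bool :=
  if (bitOf u (n-1) = false ∧ bitOf u (n-2) = true  ∧ bitOf u (n-3) = false ∧ bitOf u (n-4) = false) ∨
     (bitOf u (n-1) = true  ∧ bitOf u (n-2) = false ∧ bitOf u (n-3) = false ∧ bitOf u (n-4) = false) ∨
     (bitOf u (n-1) = false ∧ bitOf u (n-2) = true  ∧ bitOf u (n-3) = true  ∧ bitOf u (n-4) = true) ∨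
     (bitOf u (n-1) = true  ∧ bitOf u (n-2) = false ∧ bitOf u (n-3) = true  ∧ bitOf u (n-4) = true)
  then fneg n (n-4) (fneg n (n-3) u) else fneg n (n-4) u

/-- Append two zero bits at the low end. -/
def ext2 {n : ℕ} (v : Fin n → Bool) : Fin (n + 2) → Bool :=
  fun j => if h : 2 ≤ (j : ℕ) then v ⟨(j : ℕ) - 2, by have := j.isLt; omega⟩ else false

/-- Delete the two least significant bits. -/
def drop2 {n : ℕ} (w : Fin (n + 2) → Bool) : Fin n → Bool :=
  fun j => w ⟨(j : ℕ) + 2, by have := j.isLt; omega⟩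

/-- for `n ≥ 2` and even `k` with `k ∉ {n-2, n-1}`, negating bit `k`
is not an automorphism of `CQ n`. -/
theorem fneg_even_not_isAut (n k : ℕ) (hn : 2 ≤ n) (heven : k % 2 = 0)
    (hkn : k < n) (h1 : k ≠ n - 2) (h2 : k ≠ n - 1) :
    ¬ IsAut n (fneg n k) := by
  rintro ⟨-, hadj⟩
  have hk3 : k + 2 < n := by omega
  set u : Fin n → Bool := fun _ => false with hu
  set v : Fin n → Bool := fun j => decide ((j : ℕ) = k + 2) with hv
  have hbu : ∀ i, bitOf u i = false := by
    intro i; unfold bitOf; split <;> simp [hu]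
  have hbv : ∀ i, bitOf v i = decide (i = k + 2) := by
    intro i; unfold bitOf; split
    · simp [hv]
    · simp; omega
  have hbu' : ∀ i, bitOf (fneg n k u) i = decide (i = k) := by
    intro i; unfold bitOf fneg; split
    · simp [hu]
    · simp; omega
  have hbv' : ∀ i, bitOf (fneg n k v) i = (decide (i = k) || decide (i = k + 2)) := by
    intro i; unfold bitOf fneg; split
    · by_cases hik : i = k
      · simp [hv, hik]
      · simp [hv, hik]
    · simp; constructor <;> omega
  have hAdj : (CQ n).Adj u v := by
    refine ⟨k + 2, Or.inl ⟨hk3, ?_, ?_, ?_, ?_⟩⟩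
    · simp [hbu, hbv]
    · intro h; omega
    · intro i hi
      have : i ≠ k + 2 := by omega
      simp [hbu, hbv, this]
    · intro i hi
      have h1' : 2 * i + 1 ≠ k + 2 := by omega
      have h2' : 2 * i ≠ k + 2 := by omega
      simp [pairRel, hbu, hbv, h1', h2']
      omega
  have hNot : ¬ (CQ n).Adj (fneg n k u) (fneg n k v) := by
    rintro ⟨x, h | h⟩
    · obtain ⟨hx, hflip, -, -, hpair⟩ := h
      have hxk : x = k + 2 := by
        by_cases hxk' : x = k
        · subst hxk'; simp [hbu', hbv'] at hflip
        · by_contra hne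
          simp [hbu', hbv', hxk', hne] at hflip
      have hp := hpair (k / 2) (by omega)
      have e1 : 2 * (k / 2) + 1 = k + 1 := by omega
      have e0 : 2 * (k / 2) = k := by omega
      rw [e1, e0] at hp
      have hne1 : k + 1 ≠ k := by omega
      have hne2 : k + 1 ≠ k + 2 := by omega
      simp [hbu', hbv', hne1, hne2, pairRel] at hp
    · obtain ⟨hx, hflip, -, -, hpair⟩ := h
      have hxk : x = k + 2 := by
        by_cases hxk' : x = k
        · subst hxk'; simp [hbu', hbv'] at hflip
        · by_contra hne
          simp [hbu', hbv', hxk', hne] at hflip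
      have hp := hpair (k / 2) (by omega)
      have e1 : 2 * (k / 2) + 1 = k + 1 := by omega
      have e0 : 2 * (k / 2) = k := by omega
      rw [e1, e0] at hp
      have hne1 : k + 1 ≠ k := by omega
      have hne2 : k + 1 ≠ k + 2 := by omega
      simp [hbu', hbv', hne1, hne2, pairRel] at hp
  exact hNot ((hadj u v).mp hAdj)
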